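/- arXiv:1303.2951 — 3 statements merged into one kernel-verified Lean document; each statement's English description precedes it below -/
import Mathlib

section
/- Let r be odd and let nonnegative weights w_P on the pairs of an r-element set R have total weight w. Then either at least (r+3)/2 pairs P satisfy w_P > 0, or there exists S ⊆ R of size r-1 with Σ_{P⊆S} w_P ≥ (1 + 1/(4r·C(r,2)²))·(C(r-1,2)/C(r,2))·w. -/
set_option maxHeartbeats 1000000 in
open Finset in
/-- For odd `r`: either at least `(r+3)/2` pairs have positive weight, or some
`(r-1)`-set has internal weight at least
`(1 + 1/(4r·C(r,2)²))·(C(r-1,2)/C(r,2))·w`. -/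
theorem odd_discrepancy (r : ℕ) (hr : 3 ≤ r) (hodd : Odd r)
    (w : Finset (Fin r) → ℝ) (hw : ∀ P, 0 ≤ w P)
    (W : ℝ)
    (hW : W = ∑ P ∈ powersetCard 2 (univ : Finset (Fin r)), w P) :
    (((r : ℝ) + 3) / 2 ≤
      (((powersetCard 2 (univ : Finset (Fin r))).filter
        fun P => 0 < w P).card : ℝ)) ∨
    ∃ S ∈ powersetCard (r - 1) (univ : Finset (Fin r)),
      (1 + 1 / (4 * (r : ℝ) * (r.choose 2 : ℝ) ^ 2)) *
        (((r - 1).choose 2 : ℝ) / (r.choose 2 : ℝ)) * W ≤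
      ∑ P ∈ powersetCard 2 S, w P := by
  by_contra hcon
  push_neg at hcon
  obtain ⟨h1, h2⟩ := hcon
  set pairs := powersetCard 2 (univ : Finset (Fin r)) with hpairs
  set E := pairs.filter (fun P => 0 < w P) with hEdef
  set k := E.card with hk
  set R := (r : ℝ) with hRdef
  set M := (r.choose 2 : ℝ) with hMdef
  set c := (1 + 1 / (4 * R * M ^ 2)) * (((r - 1).choose 2 : ℝ) / M) with hc
  have hR3 : (3:ℝ) ≤ R := by rw [hRdef]; exact_mod_cast hr
  have hM : M = R * (R - 1) / 2 := by
    rw [hMdef, Nat.cast_choose_two]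
  have hM' : ((r - 1).choose 2 : ℝ) = (R - 1) * (R - 2) / 2 := by
    rw [Nat.cast_choose_two]
    have h1r : (1:ℕ) ≤ r := by omega
    have : ((r - 1 : ℕ) : ℝ) = R - 1 := by
      push_cast [Nat.cast_sub h1r]; ring
    rw [this]; ring
  have hc_eq : c = (1 + 1 / (R^3 * (R-1)^2)) * ((R - 2) / R) := by
    rw [hc, hM, hM']
    have hR0 : R ≠ 0 := by nlinarith
    have hR1 : R - 1 ≠ 0 := by nlinarith
    field_simp
    ring
  have hRpos : (0:ℝ) < R := by linarith
  have hden : 0 < R^3 * (R-1)^2 :=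
    mul_pos (pow_pos hRpos 3) (pow_pos (by linarith) 2)
  have hc0 : 0 < c := by
    rw [hc_eq]
    have ha : (0:ℝ) < 1 + 1 / (R^3 * (R-1)^2) := by
      have := one_div_pos.mpr hden; linarith
    have hb : 0 < (R - 2) / R := div_pos (by linarith) hRpos
    exact mul_pos ha hb
  have h4 : (4:ℝ) ≤ (R-1)^2 := by nlinarith
  have hp3 : (0:ℝ) < R^3 := pow_pos hRpos 3
  have hcube : R^2 ≤ R^3 := by nlinarith [mul_nonneg (sq_nonneg R) (by linarith : (0:ℝ) ≤ R - 1)]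
  have hsq : R ≤ R^2 := by nlinarith
  have hbig : 4 * R^3 ≤ R^3 * (R-1)^2 := by
    nlinarith [mul_le_mul_of_nonneg_left h4 (le_of_lt hp3)]
  have haux : 1 / (R^3 * (R-1)^2) * (R - 2) ≤ 1 := by
    rw [div_mul_eq_mul_div, div_le_one hden]
    nlinarith
  have hc1 : c < 1 := by
    rw [hc_eq, ← mul_div_assoc, div_lt_one hRpos]
    nlinarith [haux]
  have hkey : 1 ≤ ((R + 1) / 2) * (1 - c) := by
    have hcR : c * R = (1 + 1 / (R^3 * (R-1)^2)) * (R - 2) := by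
      rw [hc_eq]; field_simp
    have he0 : (0:ℝ) ≤ 1 / (R^3 * (R-1)^2) := le_of_lt (one_div_pos.mpr hden)
    have heq : 1 / (R^3 * (R-1)^2) * (R^3 * (R-1)^2) = 1 :=
      one_div_mul_cancel (ne_of_gt hden)
    have hpoly : (R-2) * (R+1) ≤ 2 * (R^3 * (R-1)^2) := by
      nlinarith [hbig, hcube, hsq]
    have hprod : 1 / (R^3 * (R-1)^2) * ((R-2) * (R+1)) ≤ 2 := by
      calc 1 / (R^3 * (R-1)^2) * ((R-2) * (R+1))
          ≤ 1 / (R^3 * (R-1)^2) * (2 * (R^3 * (R-1)^2)) :=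
            mul_le_mul_of_nonneg_left hpoly he0
        _ = 2 := by rw [mul_comm (2:ℝ), ← mul_assoc, heq, one_mul]
    have hstep : (R+1) * (c*R)
        = (R-2)*(R+1) + 1 / (R^3 * (R-1)^2) * ((R-2)*(R+1)) := by
      rw [hcR]; ring
    have hstep2 : (R+1) * (c*R) ≤ R^2 - R := by
      rw [hstep]; nlinarith [hprod]
    have hlin : (R+1) * c ≤ R - 1 := by nlinarith [hRpos, hstep2]
    nlinarith [hlin]
  -- per-vertex quantities
  have hsplitP : ∀ x : Fin r,
      powersetCard 2 ((univ : Finset (Fin r)).erase x)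
        = pairs.filter (fun P => x ∉ P) := by
    intro x
    ext P
    simp only [mem_powersetCard, hpairs, mem_filter, subset_erase, subset_univ,
      true_and]
    tauto
  set d : Fin r → ℝ := fun x => ∑ P ∈ pairs.filter (fun P => x ∈ P), w P with hd
  have hdx : ∀ x : Fin r, (1 - c) * W < d x := by
    intro x
    have hSmem : (univ : Finset (Fin r)).erase x ∈
        powersetCard (r - 1) (univ : Finset (Fin r)) := by
      simp [mem_powersetCard, card_erase_of_mem, card_univ]
    have hlt := h2 _ hSmem
    rw [hsplitP x] at hlt
    have hsum := Finset.sum_filter_add_sum_filter_not pairs (fun P => x ∈ P) w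
    have : ∑ P ∈ pairs.filter (fun P => ¬ x ∈ P), w P < c * W := hlt
    have hWs : d x + ∑ P ∈ pairs.filter (fun P => ¬ x ∈ P), w P = W := by
      rw [hd, hW]; exact hsum
    linarith
  have hW0 : 0 < W := by
    set x : Fin r := ⟨0, by omega⟩ with hx
    have hSmem : (univ : Finset (Fin r)).erase x ∈
        powersetCard (r - 1) (univ : Finset (Fin r)) := by
      simp [mem_powersetCard, card_erase_of_mem, card_univ]
    have hlt := h2 _ hSmem
    have h0 : 0 ≤ ∑ P ∈ powersetCard 2 ((univ : Finset (Fin r)).erase x), w P :=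
      Finset.sum_nonneg fun P _ => hw P
    by_contra hWneg
    push_neg at hWneg
    have : c * W ≤ 0 := mul_nonpos_of_nonneg_of_nonpos hc0.le hWneg
    linarith
  have hT0 : 0 < (1 - c) * W := by
    have : 0 < 1 - c := by linarith
    positivity
  -- d as sum over positive edges
  have hdE : ∀ x : Fin r, d x = ∑ e ∈ E.filter (fun e => x ∈ e), w e := by
    intro x
    rw [hd]
    have hcomm : E.filter (fun e => x ∈ e)
        = (pairs.filter (fun P => x ∈ P)).filter (fun P => 0 < w P) := by
      rw [hEdef, Finset.filter_filter, Finset.filter_filter]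
      congr 1
      ext P
      tauto
    rw [hcomm]
    exact (Finset.sum_filter_of_ne (fun P _ hne => lt_of_le_of_ne (hw P) (Ne.symm hne))).symm
  set D : Fin r → ℕ := fun x => (E.filter (fun e => x ∈ e)).card with hD
  have hD1 : ∀ x : Fin r, 1 ≤ D x := by
    intro x
    rcases Finset.eq_empty_or_nonempty (E.filter (fun e => x ∈ e)) with he | he
    · exfalso
      have := hdx x
      rw [hdE x, he, Finset.sum_empty] at this
      linarith
    · exact Finset.card_pos.mpr he
  have hcard2 : ∀ e ∈ E, e.card = 2 := by
    intro e he
    have := (Finset.mem_filter.mp he).1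
    exact (mem_powersetCard.mp this).2
  have hdeg_sum : ∑ x : Fin r, D x = 2 * k := by
    have : ∑ x : Fin r, D x = ∑ e ∈ E, e.card := by
      simp only [hD, Finset.card_filter]
      rw [Finset.sum_comm]
      refine Finset.sum_congr rfl fun e _ => ?_
      simp [Finset.sum_ite_mem]
    rw [this, Finset.sum_congr rfl hcard2, Finset.sum_const, smul_eq_mul, hk,
      Nat.mul_comm]
  have h2k : 2 * k = r + 1 := by
    have hub : (k : ℝ) < (R + 3) / 2 := h1
    have hub' : 2 * k < r + 3 := by
      have h' : ((2 * k : ℕ) : ℝ) < (r:ℝ) + 3 := by rw [hRdef] at hub; push_cast; linarith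
      exact_mod_cast h'
    have hlb : r ≤ 2 * k := by
      have : ∑ x : Fin r, (1:ℕ) ≤ ∑ x : Fin r, D x :=
        Finset.sum_le_sum fun x _ => hD1 x
      simpa [hdeg_sum, Finset.card_univ] using this
    obtain ⟨t, ht⟩ := hodd
    omega
  have hEw : ∀ e ∈ E, (1 - c) * W < w e := by
    intro e he
    obtain ⟨a, b, hab, habe⟩ := Finset.card_eq_two.mp (hcard2 e he)
    have ha : a ∈ e := by rw [habe]; simp
    have hb : b ∈ e := by rw [habe]; simp
    have hone : D a = 1 ∨ D b = 1 := by
      by_contra hcon2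
      push_neg at hcon2
      have hDa : 2 ≤ D a := by have := hD1 a; omega
      have hDb : 2 ≤ D b := by have := hD1 b; omega
      have hsplit := Finset.sum_add_sum_compl ({a, b} : Finset (Fin r)) D
      have h4 : 4 ≤ ∑ x ∈ ({a, b} : Finset (Fin r)), D x := by
        rw [Finset.sum_pair hab]; omega
      have hrest : Fintype.card (Fin r) - 2 ≤ ∑ x ∈ ({a, b} : Finset (Fin r))ᶜ, D x := by
        calc Fintype.card (Fin r) - 2 = (({a, b} : Finset (Fin r))ᶜ).card := by
              rw [Finset.card_compl, Finset.card_pair hab]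
          _ = ∑ x ∈ ({a, b} : Finset (Fin r))ᶜ, 1 := by simp
          _ ≤ _ := Finset.sum_le_sum fun x _ => hD1 x
      have : r + 2 ≤ ∑ x : Fin r, D x := by
        have hcf : Fintype.card (Fin r) = r := Fintype.card_fin r
        omega
      rw [hdeg_sum] at this
      omega
    -- wlog via cases
    have key : ∀ x, x ∈ e → D x = 1 → (1 - c) * W < w e := by
      intro x hx hDx
      have hmem : e ∈ E.filter (fun e' => x ∈ e') := Finset.mem_filter.mpr ⟨he, hx⟩
      obtain ⟨f, hf⟩ := Finset.card_eq_one.mp hDx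
      have hef : e = f := by rw [hf] at hmem; simpa using hmem
      have : d x = w e := by
        rw [hdE x, hf, hef, Finset.sum_singleton]
      rw [← this]
      exact hdx x
    rcases hone with h | h
    · exact key a ha h
    · exact key b hb h
  have hWE : W = ∑ e ∈ E, w e := by
    rw [hW, hEdef]
    exact (Finset.sum_filter_of_ne (fun P _ hne => lt_of_le_of_ne (hw P) (Ne.symm hne))).symm
  have hEne : E.Nonempty := by
    rw [← Finset.card_pos, ← hk]; omega
  have hfin : (k : ℝ) * ((1 - c) * W) < W := by
    calc (k : ℝ) * ((1 - c) * W) = ∑ _e ∈ E, (1 - c) * W := by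
          rw [Finset.sum_const, nsmul_eq_mul, hk]
      _ < ∑ e ∈ E, w e := Finset.sum_lt_sum_of_nonempty hEne fun e he => hEw e he
      _ = W := hWE.symm
  have hkR : (k : ℝ) = (R + 1) / 2 := by
    have h' : ((2 * k : ℕ) : ℝ) = (r:ℝ) + 1 := by rw [h2k]; push_cast; ring
    rw [hRdef]
    push_cast at h'
    linarith
  rw [hkR] at hfin
  nlinarith [hkey, hW0, mul_le_mul_of_nonneg_right hkey (le_of_lt hW0)]
end

section
/- For every t ≥ 2 there exists a Gallai 3-coloring of the edges of the complete graph on t³ vertices such that for every 2-element set S of colors, every vertex set whose internal edges use only colors from S has size at most t·(2·log₂ t)². -/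
open Finset

lemma two_of_three {c1 c2 x y z : Fin 3} (hx : x = c1 ∨ x = c2)
    (hy : y = c1 ∨ y = c2) (hz : z = c1 ∨ z = c2) :
    x = y ∨ x = z ∨ y = z := by
  rcases hx with h|h <;> rcases hy with h'|h' <;> rcases hz with h''|h'' <;>
    simp [h, h', h'']

def Fc {t : ℕ} (G₀ G₁ G₂ : Fin t → Fin t → Fin 3) (u v : Fin t × Fin t × Fin t) : Fin 3 :=
  if u.1 ≠ v.1 then G₀ u.1 v.1
  else if u.2.1 ≠ v.2.1 then G₁ u.2.1 v.2.1
  else G₂ u.2.2 v.2.2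

lemma Fc_symm {t : ℕ} (G₀ G₁ G₂ : Fin t → Fin t → Fin 3)
    (hs₀ : ∀ u v, G₀ u v = G₀ v u) (hs₁ : ∀ u v, G₁ u v = G₁ v u)
    (hs₂ : ∀ u v, G₂ u v = G₂ v u) (u v : Fin t × Fin t × Fin t) :
    Fc G₀ G₁ G₂ u v = Fc G₀ G₁ G₂ v u := by
  unfold Fc
  by_cases h1 : u.1 = v.1
  · by_cases h2 : u.2.1 = v.2.1
    · simp [h1, h2, hs₂ u.2.2]
    · simp [h1, h2, Ne.symm h2, hs₁ u.2.1]
  · simp [h1, Ne.symm h1, hs₀ u.1]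

lemma Fc_rainbow {t : ℕ} (G₀ G₁ G₂ : Fin t → Fin t → Fin 3)
    (hs₀ : ∀ u v, G₀ u v = G₀ v u) (hs₁ : ∀ u v, G₁ u v = G₁ v u)
    (hp₀ : ∀ u v, G₀ u v = 0 ∨ G₀ u v = 1)
    (hp₁ : ∀ u v, G₁ u v = 0 ∨ G₁ u v = 2)
    (hp₂ : ∀ u v, G₂ u v = 1 ∨ G₂ u v = 2)
    (u v w : Fin t × Fin t × Fin t) (huv : u ≠ v) :
    Fc G₀ G₁ G₂ u v = Fc G₀ G₁ G₂ u w ∨ Fc G₀ G₁ G₂ u v = Fc G₀ G₁ G₂ v w ∨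
      Fc G₀ G₁ G₂ u w = Fc G₀ G₁ G₂ v w := by
  obtain ⟨a, b, c⟩ := u; obtain ⟨a', b', c'⟩ := v; obtain ⟨a'', b'', c''⟩ := w
  unfold Fc
  simp only [ne_eq]
  by_cases h1 : a = a'
  · subst h1
    by_cases h2 : a = a''
    · subst h2
      -- all firsts equal, go to level 1
      by_cases g1 : b = b'
      · subst g1
        by_cases g2 : b = b''
        · subst g2
          simp only [not_true, if_neg, ite_self]
          exact two_of_three (hp₂ c c') (hp₂ c c'') (hp₂ c' c'')
        · -- b = b', b ≠ b'' : F u w = G₁ b b'', F v w = G₁ b b''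
          right; right; simp [g2]
      · by_cases g2 : b = b''
        · subst g2
          -- b ≠ b', F u v = G₁ b b', F v w = G₁ b' b
          right; left; simp [g1, Ne.symm g1, hs₁ b b']
        · by_cases g3 : b' = b''
          · subst g3
            left; simp [g1]
          · simp only [g1, g2, g3, not_false_iff, if_pos, not_true, if_neg]
            exact two_of_three (hp₁ b b') (hp₁ b b'') (hp₁ b' b'')
    · -- a = a', a ≠ a''
      right; right; simp [h2]
  · by_cases h2 : a = a''
    · subst h2
      right; left; simp [h1, Ne.symm h1, hs₀ a a']
    · by_cases h3 : a' = a''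
      · subst h3
        left; simp [h1, h2]
      · simp only [h1, h2, h3, not_false_iff, if_pos]
        exact two_of_three (hp₀ a a') (hp₀ a a'') (hp₀ a' a'')

lemma fiber_bound {α β : Type*} [DecidableEq α] [DecidableEq β]
    (Z : Finset (α × β)) {n m : ℝ} (hm : 0 ≤ m)
    (hA : ((Z.image Prod.fst).card : ℝ) ≤ n)
    (hfib : ∀ a : α, (((Z.filter (fun p => p.1 = a)).image Prod.snd).card : ℝ) ≤ m) :
    (Z.card : ℝ) ≤ n * m := by
  have key : Z.card = ∑ a ∈ Z.image Prod.fst, (Z.filter (fun p => p.1 = a)).card :=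
    card_eq_sum_card_fiberwise (fun x hx => mem_image_of_mem _ hx)
  have h2 : ∀ a : α, (Z.filter (fun p => p.1 = a)).card
      = ((Z.filter (fun p => p.1 = a)).image Prod.snd).card := by
    intro a
    refine (Finset.card_image_of_injOn ?_).symm
    intro x hx y hy hxy
    simp only [mem_coe, mem_filter] at hx hy
    exact Prod.ext (hx.2.trans hy.2.symm) hxy
  calc (Z.card : ℝ)
      = ∑ a ∈ Z.image Prod.fst,
          (((Z.filter (fun p => p.1 = a)).image Prod.snd).card : ℝ) := by
        rw [key]; push_cast
        exact Finset.sum_congr rfl (fun a _ => by rw [h2])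
    _ ≤ ∑ _a ∈ Z.image Prod.fst, m := Finset.sum_le_sum (fun a _ => hfib a)
    _ = ((Z.image Prod.fst).card : ℝ) * m := by rw [Finset.sum_const, nsmul_eq_mul]
    _ ≤ n * m := mul_le_mul_of_nonneg_right hA hm

lemma triple_bound {α : Type*} [DecidableEq α] (P₀ P₁ P₂ : α → α → Prop)
    {n₀ n₁ n₂ : ℝ} (hn₁ : 0 ≤ n₁) (hn₂ : 0 ≤ n₂)
    (H₀ : ∀ A : Finset α, (∀ x ∈ A, ∀ y ∈ A, x ≠ y → P₀ x y) → (A.card : ℝ) ≤ n₀)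
    (H₁ : ∀ A : Finset α, (∀ x ∈ A, ∀ y ∈ A, x ≠ y → P₁ x y) → (A.card : ℝ) ≤ n₁)
    (H₂ : ∀ A : Finset α, (∀ x ∈ A, ∀ y ∈ A, x ≠ y → P₂ x y) → (A.card : ℝ) ≤ n₂)
    (Z : Finset (α × α × α))
    (hZ : ∀ u ∈ Z, ∀ v ∈ Z, u ≠ v →
      (u.1 ≠ v.1 → P₀ u.1 v.1) ∧ (u.1 = v.1 → u.2.1 ≠ v.2.1 → P₁ u.2.1 v.2.1) ∧
      (u.1 = v.1 → u.2.1 = v.2.1 → P₂ u.2.2 v.2.2)) :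
    (Z.card : ℝ) ≤ n₀ * (n₁ * n₂) := by
  apply fiber_bound Z (mul_nonneg hn₁ hn₂)
  · apply H₀
    intro x hx y hy hxy
    simp only [mem_image] at hx hy
    obtain ⟨u, hu, hux⟩ := hx
    obtain ⟨v, hv, hvy⟩ := hy
    subst hux; subst hvy
    have huv : u ≠ v := fun h => hxy (by rw [h])
    exact (hZ u hu v hv huv).1 hxy
  · intro a
    apply fiber_bound _ hn₂
    · apply H₁
      intro x hx y hy hxy
      simp only [mem_image, mem_filter] at hx hy
      obtain ⟨p, ⟨u, ⟨hu, hu1⟩, hup⟩, hpx⟩ := hx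
      obtain ⟨q, ⟨v, ⟨hv, hv1⟩, hvq⟩, hqy⟩ := hy
      subst hup; subst hvq; subst hpx; subst hqy
      have huv : u ≠ v := fun h => hxy (by rw [h])
      exact (hZ u hu v hv huv).2.1 (hu1.trans hv1.symm) hxy
    · intro b
      apply H₂
      intro x hx y hy hxy
      simp only [mem_image, mem_filter] at hx hy
      obtain ⟨p, ⟨⟨u, ⟨hu, hu1⟩, hup⟩, hp1⟩, hpx⟩ := hx
      obtain ⟨q, ⟨⟨v, ⟨hv, hv1⟩, hvq⟩, hq1⟩, hqy⟩ := hy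
      subst hup; subst hvq; subst hpx; subst hqy
      have huv : u ≠ v := fun h => hxy (by rw [h])
      exact (hZ u hu v hv huv).2.2 (hu1.trans hv1.symm) (hp1.trans hq1.symm)

lemma clique_bound {t : ℕ} (G : Fin t → Fin t → Fin 3) {c₁ c₂ c : Fin 3} {S : Finset (Fin 3)} {L : ℝ}
    (hp : ∀ u v, G u v = c₁ ∨ G u v = c₂)
    (h1 : c₁ ∈ S → c₁ = c) (h2 : c₂ ∈ S → c₂ = c)
    (hc : ∀ Z : Finset (Fin t), (∀ u ∈ Z, ∀ v ∈ Z, u ≠ v → G u v = c) → (Z.card : ℝ) ≤ L)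
    (A : Finset (Fin t)) (hA : ∀ x ∈ A, ∀ y ∈ A, x ≠ y → G x y ∈ S) :
    (A.card : ℝ) ≤ L := by
  refine hc A ?_
  intro x hx y hy hxy
  have hm := hA x hx y hy hxy
  rcases hp x y with h | h <;> rw [h] at hm ⊢
  · exact h1 hm
  · exact h2 hm


/-- `F` has no rainbow triangle. -/
def IsRainbowFree {V C : Type*} (F : V → V → C) : Prop :=
  ∀ u v w : V, u ≠ v → u ≠ w → v ≠ w →
    F u v = F u w ∨ F u v = F v w ∨ F u w = F v w

/-- For every `t ≥ 2`, given for each pair of colors a 2-coloring of `K_t` with no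
monochromatic clique larger than `2·log₂ t`, there is a Gallai 3-coloring of
`K_{t³}` in which every set of vertices using only two colors has size at most
`t·(2·log₂ t)²`. -/
theorem gallai_upper_three (t : ℕ) (ht : 2 ≤ t)
    (hex : ∀ c₁ c₂ : Fin 3, c₁ ≠ c₂ → ∃ F : Fin t → Fin t → Fin 3,
      (∀ u v, F u v = F v u) ∧ (∀ u v, F u v = c₁ ∨ F u v = c₂) ∧
      ∀ c : Fin 3, ∀ Z : Finset (Fin t),
        (∀ u ∈ Z, ∀ v ∈ Z, u ≠ v → F u v = c) →
        (Z.card : ℝ) ≤ 2 * Real.logb 2 t) :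
    ∃ F : Fin (t ^ 3) → Fin (t ^ 3) → Fin 3,
      (∀ u v, F u v = F v u) ∧ IsRainbowFree F ∧
      ∀ S : Finset (Fin 3), S.card = 2 → ∀ Z : Finset (Fin (t ^ 3)),
        (∀ u ∈ Z, ∀ v ∈ Z, u ≠ v → F u v ∈ S) →
        (Z.card : ℝ) ≤ (t : ℝ) * (2 * Real.logb 2 t) ^ 2 := by
  classical
  obtain ⟨G₀, hs₀, hp₀, hc₀⟩ := hex 0 1 (by decide)
  obtain ⟨G₁, hs₁, hp₁, hc₁⟩ := hex 0 2 (by decide)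
  obtain ⟨G₂, hs₂, hp₂, hc₂⟩ := hex 1 2 (by decide)
  set L : ℝ := 2 * Real.logb 2 t with hLdef
  have hL : 0 ≤ L := by
    have : (1:ℝ) ≤ (t:ℝ) := by exact_mod_cast le_trans (by norm_num) ht
    have := Real.logb_nonneg (b := 2) (by norm_num) this
    rw [hLdef]; linarith
  have e : Fin (t ^ 3) ≃ Fin t × Fin t × Fin t :=
    Fintype.equivOfCardEq (by simp; ring)
  refine ⟨fun u v => Fc G₀ G₁ G₂ (e u) (e v), ?_, ?_, ?_⟩
  · intro u v
    exact Fc_symm G₀ G₁ G₂ hs₀ hs₁ hs₂ (e u) (e v)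
  · intro u v w huv huw hvw
    exact Fc_rainbow G₀ G₁ G₂ hs₀ hs₁ hp₀ hp₁ hp₂ (e u) (e v) (e w)
      (fun h => huv (e.injective h))
  · intro S hS Z hZ
    have hS3 : S = {0, 1} ∨ S = {0, 2} ∨ S = {1, 2} := by
      have : ∀ T : Finset (Fin 3), T.card = 2 →
          T = {0, 1} ∨ T = {0, 2} ∨ T = {1, 2} := by decide
      exact this S hS
    set Z' : Finset (Fin t × Fin t × Fin t) := Z.image e with hZ'def
    have hcard : (Z.card : ℝ) = (Z'.card : ℝ) := by
      rw [hZ'def, Finset.card_image_of_injective _ e.injective]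
    have hZS : ∀ u ∈ Z', ∀ v ∈ Z', u ≠ v → Fc G₀ G₁ G₂ u v ∈ S := by
      intro u hu v hv huv
      rw [hZ'def, Finset.mem_image] at hu hv
      obtain ⟨x, hx, hxu⟩ := hu
      obtain ⟨y, hy, hyv⟩ := hv
      subst hxu; subst hyv
      exact hZ x hx y hy (fun h => huv (by rw [h]))
    have hpred : ∀ u ∈ Z', ∀ v ∈ Z', u ≠ v →
        (u.1 ≠ v.1 → G₀ u.1 v.1 ∈ S) ∧
        (u.1 = v.1 → u.2.1 ≠ v.2.1 → G₁ u.2.1 v.2.1 ∈ S) ∧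
        (u.1 = v.1 → u.2.1 = v.2.1 → G₂ u.2.2 v.2.2 ∈ S) := by
      intro u hu v hv huv
      have h := hZS u hu v hv huv
      unfold Fc at h
      refine ⟨fun hne => ?_, fun he hne => ?_, fun he he2 => ?_⟩
      · rwa [if_pos hne] at h
      · rwa [if_neg (not_not_intro he), if_pos hne] at h
      · rwa [if_neg (not_not_intro he), if_neg (not_not_intro he2)] at h
    have ht0 : (0:ℝ) ≤ (t:ℝ) := by positivity
    have hUniv : ∀ A : Finset (Fin t), (A.card : ℝ) ≤ (t : ℝ) := by
      intro A
      have h : A.card ≤ t := by simpa using Finset.card_le_univ A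
      exact_mod_cast h
    rcases hS3 with h | h | h <;> subst h
    · calc (Z.card : ℝ) = Z'.card := hcard
        _ ≤ (t:ℝ) * (L * L) :=
            triple_bound (fun x y => G₀ x y ∈ ({0,1} : Finset (Fin 3)))
              (fun x y => G₁ x y ∈ ({0,1} : Finset (Fin 3)))
              (fun x y => G₂ x y ∈ ({0,1} : Finset (Fin 3))) hL hL (fun A _ => hUniv A)
              (clique_bound (c := 0) (S := {0,1}) G₁ hp₁ (by decide) (by decide) (hc₁ 0))
              (clique_bound (c := 1) (S := {0,1}) G₂ hp₂ (by decide) (by decide) (hc₂ 1)) Z' hpred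
        _ = (t:ℝ) * L ^ 2 := by ring
    · calc (Z.card : ℝ) = Z'.card := hcard
        _ ≤ L * ((t:ℝ) * L) :=
            triple_bound (fun x y => G₀ x y ∈ ({0,2} : Finset (Fin 3)))
              (fun x y => G₁ x y ∈ ({0,2} : Finset (Fin 3)))
              (fun x y => G₂ x y ∈ ({0,2} : Finset (Fin 3))) ht0 hL
              (clique_bound (c := 0) (S := {0,2}) G₀ hp₀ (by decide) (by decide) (hc₀ 0))
              (fun A _ => hUniv A)
              (clique_bound (c := 2) (S := {0,2}) G₂ hp₂ (by decide) (by decide) (hc₂ 2)) Z' hpred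
        _ = (t:ℝ) * L ^ 2 := by ring
    · calc (Z.card : ℝ) = Z'.card := hcard
        _ ≤ L * (L * (t:ℝ)) :=
            triple_bound (fun x y => G₀ x y ∈ ({1,2} : Finset (Fin 3)))
              (fun x y => G₁ x y ∈ ({1,2} : Finset (Fin 3)))
              (fun x y => G₂ x y ∈ ({1,2} : Finset (Fin 3))) hL ht0
              (clique_bound (c := 1) (S := {1,2}) G₀ hp₀ (by decide) (by decide) (hc₀ 1))
              (clique_bound (c := 2) (S := {1,2}) G₁ hp₁ (by decide) (by decide) (hc₁ 2))
              (fun A _ => hUniv A) Z' hpred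
        _ = (t:ℝ) * L ^ 2 := by ring
end

section
/- Let m ≥ C where C = 2^{D^8} and D = 2^{2048}, and let f : (0, m] → ℝ be defined piecewise (with c = D^{-16}/4) by f(n) = c·log²(Cn) for 0 < n ≤ m^{4/9}, f(n) = c²·log²(m^{4/9})·log²(C·n·m^{-4/9}) for m^{4/9} < n ≤ m^{8/9}, and f(n) = c³·log⁴(m^{4/9})·log²(C·n·m^{-8/9}) for m^{8/9} < n ≤ m. Then for any integer n with 1 < n ≤ m and any α ∈ [1/n, 1], f(α·n) ≥ α·f(n). -/
/-!
The inequality `α f(n) ≤ f(α n)` for `α ≤ 1` says that `f(x) / x` is antitone on `[1, m]`.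
On each of the three pieces, `f(x) / x` is a nonnegative multiple of `ψ(s x)`, where
`ψ(y) = log² y / y` and the scale `s` keeps `s x ≥ C`; since `ψ` decreases on `[e², ∞)`, each
piece is antitone. At the two breakpoints `f` jumps down, because `c · log² C ≤ 1`.
-/

open Real Set

theorem logb_sq_div_self_antitoneOn (b : ℝ) :
    AntitoneOn (fun x => logb b x ^ 2 / x) (Ici (exp 2)) := by
  intro x hx y hy hxy
  have hexp : 1 ≤ exp 2 := one_le_exp zero_le_two
  have hsq : ∀ z : ℝ, 0 ≤ z → logb b z ^ 2 / z = (log z / √z) ^ 2 / log b ^ 2 := by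
    intro z hz
    rw [div_pow, sq_sqrt hz, logb, div_pow]
    ring
  have hy0 : 0 ≤ log y / √y := div_nonneg (log_nonneg (hexp.trans hy)) (sqrt_nonneg y)
  show logb b y ^ 2 / y ≤ logb b x ^ 2 / x
  rw [hsq x (by linarith [mem_Ici.mp hx]), hsq y (by linarith [mem_Ici.mp hy])]
  gcongr ?_ ^ 2 / _
  exact log_div_sqrt_antitoneOn hx hy hxy

theorem mul_logb_sq_mul_div_self_antitoneOn (b : ℝ) {k s x₀ : ℝ} (hk : 0 ≤ k) (hs : 0 < s)
    (hx₀ : exp 2 ≤ s * x₀) :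
    AntitoneOn (fun x => k * logb b (s * x) ^ 2 / x) (Ici x₀) := by
  intro x hx y hy hxy
  have hsx : exp 2 ≤ s * x := hx₀.trans (by gcongr; exact hx)
  have hsy : exp 2 ≤ s * y := hx₀.trans (by gcongr; exact hy)
  have hscale : ∀ z, exp 2 ≤ s * z →
      k * logb b (s * z) ^ 2 / z = k * s * (logb b (s * z) ^ 2 / (s * z)) := by
    intro z hz
    have : z ≠ 0 := by rintro rfl; linarith [exp_pos 2]
    field_simp
  show k * logb b (s * y) ^ 2 / y ≤ k * logb b (s * x) ^ 2 / x
  rw [hscale x hsx, hscale y hsy]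
  gcongr ?_ * ?_
  exact logb_sq_div_self_antitoneOn b hsx hsy (by gcongr)

theorem AntitoneOn.Icc_of_piecewise {F g₁ g₂ : ℝ → ℝ} {l a b : ℝ}
    (h₁ : AntitoneOn g₁ (Icc l a)) (h₂ : AntitoneOn g₂ (Icc a b))
    (hF₁ : EqOn F g₁ (Icc l a)) (hF₂ : EqOn F g₂ (Ioc a b)) (hjump : g₂ a ≤ g₁ a) :
    AntitoneOn F (Icc l b) := by
  rintro x ⟨hlx, hxb⟩ y ⟨hly, hyb⟩ hxy
  rcases le_or_gt y a with hya | hay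
  · rw [hF₁ ⟨hlx, hxy.trans hya⟩, hF₁ ⟨hly, hya⟩]
    exact h₁ ⟨hlx, hxy.trans hya⟩ ⟨hly, hya⟩ hxy
  rcases le_or_gt x a with hxa | hax
  · rw [hF₁ ⟨hlx, hxa⟩, hF₂ ⟨hay, hyb⟩]
    calc g₂ y ≤ g₂ a := h₂ ⟨le_rfl, hay.le.trans hyb⟩ ⟨hay.le, hyb⟩ hay.le
      _ ≤ g₁ a := hjump
      _ ≤ g₁ x := h₁ ⟨hlx, hxa⟩ ⟨hlx.trans hxa, le_rfl⟩ hxa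
  · rw [hF₂ ⟨hax, hxb⟩, hF₂ ⟨hay, hyb⟩]
    exact h₂ ⟨hax.le, hxb⟩ ⟨hay.le, hyb⟩ hxy

theorem div_self_antitoneOn_Icc (c C m : ℝ) (f : ℝ → ℝ) (hc : 0 ≤ c)
    (hcC : c * logb 2 C ^ 2 ≤ 1) (hC : exp 2 ≤ C) (hCm : C ≤ m)
    (hf₁ : ∀ x : ℝ, 0 < x → x ≤ m ^ ((4 : ℝ) / 9) →
      f x = c * (logb 2 (C * x)) ^ 2)
    (hf₂ : ∀ x : ℝ, m ^ ((4 : ℝ) / 9) < x → x ≤ m ^ ((8 : ℝ) / 9) →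
      f x = c ^ 2 * (logb 2 (m ^ ((4 : ℝ) / 9))) ^ 2 *
        (logb 2 (C * x * m ^ (-(4 : ℝ) / 9))) ^ 2)
    (hf₃ : ∀ x : ℝ, m ^ ((8 : ℝ) / 9) < x → x ≤ m →
      f x = c ^ 3 * (logb 2 (m ^ ((4 : ℝ) / 9))) ^ 4 *
        (logb 2 (C * x * m ^ (-(8 : ℝ) / 9))) ^ 2) :
    AntitoneOn (fun x => f x / x) (Icc 1 m) := by
  set M := m ^ ((4 : ℝ) / 9)
  set N := m ^ ((8 : ℝ) / 9)
  set A := logb 2 M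
  set K := logb 2 C
  have hC1 : 1 < C := (one_lt_exp_iff.mpr two_pos).trans_le hC
  have hm1 : 1 < m := hC1.trans_le hCm
  have hm0 : 0 < m := one_pos.trans hm1
  have hM1 : 1 < M := one_lt_rpow hm1 (by norm_num)
  have hMN : M < N := rpow_lt_rpow_of_exponent_lt hm1 (by norm_num)
  have hA : 0 ≤ A := logb_nonneg one_lt_two hM1.le
  have hK : 0 ≤ K := logb_nonneg one_lt_two hC1.le
  have hM_inv : m ^ (-(4 : ℝ) / 9) * M = 1 := by
    rw [← rpow_add hm0]; norm_num
  have hN_inv : m ^ (-(8 : ℝ) / 9) * N = 1 := by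
    rw [← rpow_add hm0]; norm_num
  have hN_div : m ^ (-(4 : ℝ) / 9) * N = M := by
    rw [← rpow_add hm0]; norm_num [M]
  have hlogCM : logb 2 (C * M) = K + A :=
    logb_mul (by positivity) (by positivity)
  have hjump : c * K ^ 2 * A ^ 2 ≤ (K + A) ^ 2 := by nlinarith
  set g₁ := fun x => c * logb 2 (C * x) ^ 2 / x
  set g₂ := fun x => c ^ 2 * A ^ 2 * logb 2 (C * m ^ (-(4 : ℝ) / 9) * x) ^ 2 / x
  set g₃ := fun x => c ^ 3 * A ^ 4 * logb 2 (C * m ^ (-(8 : ℝ) / 9) * x) ^ 2 / x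
  have hg₁ : AntitoneOn g₁ (Icc 1 M) :=
    (mul_logb_sq_mul_div_self_antitoneOn 2 hc (by positivity) (by rwa [mul_one])).mono
      Icc_subset_Ici_self
  have hg₂ : AntitoneOn g₂ (Icc M N) :=
    (mul_logb_sq_mul_div_self_antitoneOn 2 (by positivity) (by positivity)
      (by rwa [mul_assoc, hM_inv, mul_one])).mono Icc_subset_Ici_self
  have hg₃ : AntitoneOn g₃ (Icc N m) :=
    (mul_logb_sq_mul_div_self_antitoneOn 2 (by positivity) (by positivity)
      (by rwa [mul_assoc, hN_inv, mul_one])).mono Icc_subset_Ici_self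
  have hF₂ : EqOn (fun x => f x / x) g₂ (Ioc M N) := fun x hx => by
    simp only [g₂, hf₂ x hx.1 hx.2, mul_right_comm C]
  have hlower : AntitoneOn (fun x => f x / x) (Icc 1 N) := by
    refine hg₁.Icc_of_piecewise hg₂ (fun x hx => ?_) hF₂ ?_
    · simp only [g₁, hf₁ x (one_pos.trans_le hx.1) hx.2]
    · simp only [g₁, g₂, mul_assoc C, hM_inv, mul_one, hlogCM]
      gcongr ?_ / _
      calc c ^ 2 * A ^ 2 * K ^ 2 = c * (c * K ^ 2 * A ^ 2) := by ring
        _ ≤ c * (K + A) ^ 2 := by gcongr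
  refine hlower.Icc_of_piecewise hg₃ (fun _ _ => rfl) (fun x hx => ?_) ?_
  · simp only [g₃, hf₃ x hx.1 hx.2, mul_right_comm C]
  · refine le_of_le_of_eq ?_ (hF₂ ⟨hMN, le_rfl⟩).symm
    simp only [g₂, g₃, mul_assoc C, hN_inv, hN_div, mul_one, hlogCM]
    gcongr ?_ / _
    calc c ^ 3 * A ^ 4 * K ^ 2 = c ^ 2 * A ^ 2 * (c * K ^ 2 * A ^ 2) := by ring
      _ ≤ c ^ 2 * A ^ 2 * (K + A) ^ 2 := by gcongr

theorem exp_two_le_two_rpow {K : ℝ} (hK : 4 ≤ K) : exp 2 ≤ 2 ^ K :=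
  calc exp 2 = exp 1 ^ 2 := by rw [← exp_nat_mul]; norm_num
    _ ≤ 3 ^ 2 := by gcongr; exact exp_one_lt_three.le
    _ ≤ (2 : ℝ) ^ (4 : ℝ) := by norm_num
    _ ≤ 2 ^ K := rpow_le_rpow_of_exponent_le one_le_two hK

/-- For `m ≥ C` with `D = 2^2048`, `C = 2^(D^8)`, `c = D^{-16}/4`, and `f` the
piecewise function of the paper, for any integer `1 < n ≤ m` and any
`α ∈ [1/n, 1]`, `f(α·n) ≥ α·f(n)`. -/
theorem f_superlinear (D C c m : ℝ)
    (hD : D = 2 ^ (2048 : ℕ))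
    (hC : C = (2 : ℝ) ^ (D ^ 8))
    (hc : c = D ^ (-(16 : ℝ)) / 4)
    (hm : C ≤ m)
    (f : ℝ → ℝ)
    (hf₁ : ∀ x : ℝ, 0 < x → x ≤ m ^ ((4 : ℝ) / 9) →
      f x = c * (Real.logb 2 (C * x)) ^ 2)
    (hf₂ : ∀ x : ℝ, m ^ ((4 : ℝ) / 9) < x → x ≤ m ^ ((8 : ℝ) / 9) →
      f x = c ^ 2 * (Real.logb 2 (m ^ ((4 : ℝ) / 9))) ^ 2 *
        (Real.logb 2 (C * x * m ^ (-(4 : ℝ) / 9))) ^ 2)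
    (hf₃ : ∀ x : ℝ, m ^ ((8 : ℝ) / 9) < x → x ≤ m →
      f x = c ^ 3 * (Real.logb 2 (m ^ ((4 : ℝ) / 9))) ^ 4 *
        (Real.logb 2 (C * x * m ^ (-(8 : ℝ) / 9))) ^ 2) :
    ∀ n : ℕ, 1 < n → (n : ℝ) ≤ m → ∀ α : ℝ, 1 / (n : ℝ) ≤ α → α ≤ 1 →
      α * f n ≤ f (α * n) := by
  intro n hn hnm α hα1 hα
  have hD2 : 2 ≤ D := by rw [hD]; exact le_self_pow₀ one_le_two (by norm_num)
  have hlogC : logb 2 C = D ^ 8 := by rw [hC, logb_rpow two_pos (by norm_num)]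
  have hcC : c * logb 2 C ^ 2 = 1 / 4 := by
    rw [hc, hlogC, rpow_neg (zero_le_two.trans hD2), show (16 : ℝ) = (16 : ℕ) by norm_num,
      rpow_natCast]
    field_simp
  have hexpC : exp 2 ≤ C := hC ▸ exp_two_le_two_rpow
    (calc (4 : ℝ) ≤ 2 ^ 8 := by norm_num
      _ ≤ D ^ 8 := by gcongr)
  have hanti := div_self_antitoneOn_Icc c C m f (by rw [hc]; positivity) (by linarith) hexpC hm
    hf₁ hf₂ hf₃
  have hn0 : (0 : ℝ) < n := Nat.cast_pos.mpr (by omega)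
  have hαn : 1 ≤ α * n := (div_le_iff₀ hn0).mp hα1
  have hαnn : α * n ≤ n := mul_le_of_le_one_left hn0.le hα
  have hratio : f n / n ≤ f (α * n) / (α * n) :=
    hanti ⟨hαn, hαnn.trans hnm⟩ ⟨hαn.trans hαnn, hnm⟩ hαnn
  calc α * f n = α * n * (f n / n) := by field_simp
    _ ≤ α * n * (f (α * n) / (α * n)) := by gcongr
    _ = f (α * n) := mul_div_cancel₀ _ (by linarith)
end
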